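/- Let G₁ and G₂ be finitely generated groups whose profinite completions are isomorphic as topological groups. Then for every positive integer n and every subgroup H of G₁ of index n, there exists a subgroup K of G₂ of index n whose abelianization K/[K,K] is isomorphic to the abelianization H/[H,H]; and symmetrically with the roles of G₁ and G₂ exchanged. In particular, FIA(G₁) = FIA(G₂). -/

import Mathlib

universe u v

namespace ProfinitePaper

variable (G : Type u) [Group G]

/-- The finite-index normal subgroups of `G`, indexing the finite quotients. -/
abbrev FinNormal : Type u := {N : Subgroup G // N.Normal ∧ N.FiniteIndex}

variable {G} in
instance (N : FinNormal G) : N.1.Normal := N.2.1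

variable {G} in
instance (N : FinNormal G) : N.1.FiniteIndex := N.2.2

/-- Each finite quotient carries the discrete topology. -/
instance (N : FinNormal G) : TopologicalSpace (G ⧸ N.1) := ⊥

instance (N : FinNormal G) : DiscreteTopology (G ⧸ N.1) := ⟨rfl⟩

instance (N : FinNormal G) : IsTopologicalGroup (G ⧸ N.1) where
  continuous_mul := continuous_of_discreteTopology
  continuous_inv := continuous_of_discreteTopology

/-- The profinite completion of `G`, as the inverse limit (compatible families)
inside the product of all finite quotients of `G`. -/
def profiniteCompletionSubgroup : Subgroup (∀ N : FinNormal G, G ⧸ N.1) where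
  carrier := {x | ∀ (N M : FinNormal G) (h : N.1 ≤ M.1),
    QuotientGroup.map N.1 M.1 (MonoidHom.id G) (fun _ hx => h hx) (x N) = x M}
  one_mem' := fun N M h => by simp
  mul_mem' := fun {x y} hx hy N M h => by
    simp only [Pi.mul_apply, map_mul, hx N M h, hy N M h]
  inv_mem' := fun {x} hx N M h => by
    simp only [Pi.inv_apply, map_inv, hx N M h]

/-- The profinite completion `Ĝ` of `G`, regarded as a topological group: it is the
inverse limit of the discrete finite quotients `G/N`, a compact, Hausdorff, totally
disconnected topological group (with the subspace topology from the product of the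
discrete finite quotients). -/
abbrev ProfiniteCompletion : Type u := profiniteCompletionSubgroup G

/-- The canonical homomorphism `ι : G → Ĝ`, induced by the quotient maps `G → G/N`. -/
def iota : G →* ProfiniteCompletion G :=
  MonoidHom.codRestrict (Pi.monoidHom fun N : FinNormal G => QuotientGroup.mk' N.1)
    (profiniteCompletionSubgroup G)
    (fun g N M h => by first | rfl | simp)

/-! ### Auxiliary lemmas: projections of the profinite completion -/

variable {G}

/-- Projection from the profinite completion to the finite quotient `G/N`. -/
def piProj (N : FinNormal G) : ProfiniteCompletion G →* G ⧸ N.1 :=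
  (Pi.evalMonoidHom (fun N : FinNormal G => G ⧸ N.1) N).comp
    (profiniteCompletionSubgroup G).subtype

lemma piProj_apply (N : FinNormal G) (x : ProfiniteCompletion G) :
    piProj N x = x.1 N := rfl

lemma piProj_iota (N : FinNormal G) (g : G) :
    piProj N (iota G g) = QuotientGroup.mk g := rfl

/-- The kernel of the projection to `G/N`, a basic open subgroup of the completion. -/
def KK (N : FinNormal G) : Subgroup (ProfiniteCompletion G) := (piProj N).ker

lemma mem_KK {N : FinNormal G} {x : ProfiniteCompletion G} :
    x ∈ KK N ↔ x.1 N = 1 := Iff.rfl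

lemma KK_mono {N M : FinNormal G} (h : N.1 ≤ M.1) : KK N ≤ KK M := by
  intro x hx
  have hc : QuotientGroup.map N.1 M.1 (MonoidHom.id G) (fun _ hx => h hx) (x.1 N) = x.1 M :=
    x.2 N M h
  have hx1 : x.1 N = 1 := hx
  show x.1 M = 1
  rw [← hc, hx1, map_one]

lemma comap_iota_KK (N : FinNormal G) : (KK N).comap (iota G) = N.1 := by
  ext g
  show piProj N (iota G g) = 1 ↔ g ∈ N.1
  rw [piProj_iota, QuotientGroup.eq_one_iff]

/-- Density of `ι(G)`: every coset of a subgroup containing some `KK N` meets `ι(G)`. -/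
lemma exists_iota_inv_mul_mem {N : FinNormal G} {W : Subgroup (ProfiniteCompletion G)}
    (hW : KK N ≤ W) (x : ProfiniteCompletion G) :
    ∃ g : G, (iota G g)⁻¹ * x ∈ W := by
  obtain ⟨g, hg⟩ := QuotientGroup.mk_surjective (x.1 N)
  refine ⟨g, hW ?_⟩
  show piProj N ((iota G g)⁻¹ * x) = 1
  rw [map_mul, map_inv, piProj_iota, piProj_apply, hg, inv_mul_cancel]

lemma isOpen_KK (N : FinNormal G) :
    IsOpen ((KK N : Subgroup (ProfiniteCompletion G)) : Set (ProfiniteCompletion G)) := by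
  have h : ((KK N : Subgroup (ProfiniteCompletion G)) : Set (ProfiniteCompletion G))
      = (fun x : ProfiniteCompletion G => x.1 N) ⁻¹' {1} := rfl
  rw [h]
  exact (isOpen_discrete _).preimage ((continuous_apply N).comp continuous_subtype_val)

/-- Every open neighbourhood of `1` in the completion contains a basic subgroup `KK N`. -/
lemma exists_KK_subset_of_isOpen {U : Set (ProfiniteCompletion G)} (hU : IsOpen U)
    (h1 : (1 : ProfiniteCompletion G) ∈ U) :
    ∃ N : FinNormal G, ((KK N : Subgroup (ProfiniteCompletion G)) : Set _) ⊆ U := by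
  classical
  obtain ⟨V, hV, rfl⟩ := isOpen_induced_iff.mp hU
  obtain ⟨I, u, hu, hsub⟩ := isOpen_pi_iff.mp hV _ h1
  have hnormal : (⨅ i ∈ I, (i : FinNormal G).1).Normal := by
    constructor
    intro x hx g
    simp only [Subgroup.mem_iInf] at hx ⊢
    intro i hi
    exact i.2.1.conj_mem x (hx i hi) g
  have hfin : (⨅ i ∈ I, (i : FinNormal G).1).FiniteIndex :=
    Subgroup.finiteIndex_iInf' _ (fun i _ => i.2.2)
  refine ⟨⟨⨅ i ∈ I, (i : FinNormal G).1, hnormal, hfin⟩, ?_⟩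
  intro x hx
  apply hsub
  intro i hi
  have hle : (⨅ i ∈ I, (i : FinNormal G).1) ≤ i.1 := biInf_le _ hi
  have hx1 : x.1 ⟨⨅ i ∈ I, (i : FinNormal G).1, hnormal, hfin⟩ = 1 := hx
  have hc := x.2 ⟨⨅ i ∈ I, (i : FinNormal G).1, hnormal, hfin⟩ i hle
  have : x.1 i = 1 := by rw [← hc, hx1, map_one]
  rw [this]
  exact (hu i hi).2

lemma map_iota_comap_sup_KK {U : Subgroup (ProfiniteCompletion G)} {N : FinNormal G}
    (h : KK N ≤ U) : (U.comap (iota G)).map (iota G) ⊔ KK N = U := by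
  apply le_antisymm
  · exact sup_le (Subgroup.map_comap_le _ _) h
  · intro x hx
    obtain ⟨g, hg⟩ := exists_iota_inv_mul_mem (le_refl (KK N)) x
    have hgU : iota G g ∈ U := by
      have : iota G g = x * ((iota G g)⁻¹ * x)⁻¹ := by group
      rw [this]
      exact mul_mem hx (inv_mem (h hg))
    have hmem : iota G g ∈ (U.comap (iota G)).map (iota G) :=
      Subgroup.mem_map_of_mem _ hgU
    have : x = iota G g * ((iota G g)⁻¹ * x) := by group
    rw [this]
    exact mul_mem (Subgroup.mem_sup_left hmem) (Subgroup.mem_sup_right hg)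

lemma map_KK_piProj_eq_bot (N : FinNormal G) : (KK N).map (piProj N) = ⊥ := by
  rw [eq_bot_iff]
  rintro y ⟨x, hx, rfl⟩
  exact hx

lemma comap_iota_map_sup_KK {H : Subgroup G} {N : FinNormal G} (hNH : N.1 ≤ H) :
    (H.map (iota G) ⊔ KK N).comap (iota G) = H := by
  apply le_antisymm
  · intro g hg
    have hproj : piProj N (iota G g) ∈ (H.map (iota G) ⊔ KK N).map (piProj N) :=
      Subgroup.mem_map_of_mem _ hg
    rw [Subgroup.map_sup, Subgroup.map_map, map_KK_piProj_eq_bot, sup_bot_eq] at hproj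
    rw [piProj_iota] at hproj
    obtain ⟨h, hh, hhg⟩ := hproj
    have : h⁻¹ * g ∈ N.1 := by
      rw [← QuotientGroup.eq]
      exact hhg
    have hgH : g = h * (h⁻¹ * g) := by group
    rw [hgH]
    exact mul_mem hh (hNH this)
  · intro g hg
    exact Subgroup.mem_sup_left (Subgroup.mem_map_of_mem _ hg)

instance KK_normal (N : FinNormal G) : (KK N).Normal := MonoidHom.normal_ker _

lemma KK_le_map_sup {H : Subgroup G} {N N' : FinNormal G} (hN : N.1 ≤ H) :
    KK N ≤ H.map (iota G) ⊔ KK N' := by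
  intro x hx
  let N'' : FinNormal G := ⟨N.1 ⊓ N'.1, inferInstance, inferInstance⟩
  obtain ⟨g, hg⟩ := exists_iota_inv_mul_mem (le_refl (KK N'')) x
  have hgN : iota G g ∈ KK N := by
    have h0 : iota G g = x * ((iota G g)⁻¹ * x)⁻¹ := by group
    rw [h0]
    exact mul_mem hx (inv_mem (KK_mono inf_le_left hg))
  have hgH : g ∈ H := hN (by rw [← comap_iota_KK N]; exact hgN)
  have hx2 : x = iota G g * ((iota G g)⁻¹ * x) := by group
  rw [hx2]
  exact mul_mem (Subgroup.mem_sup_left (Subgroup.mem_map_of_mem _ hgH))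
    (Subgroup.mem_sup_right (KK_mono inf_le_right hg))

open scoped commutatorElement

/-! ### Verbal subgroups generated by commutators and `k`-th powers -/

/-- Generating set: commutators and `k`-th powers. -/
def Vset (k : ℕ) (Γ : Type v) [Group Γ] : Set Γ :=
  {x | (∃ a b : Γ, ⁅a, b⁆ = x) ∨ ∃ a : Γ, a ^ k = x}

/-- The subgroup generated by all commutators and all `k`-th powers. -/
def Vk (k : ℕ) (Γ : Type v) [Group Γ] : Subgroup Γ :=
  Subgroup.closure (Vset k Γ)

lemma commutator_le_Vk (k : ℕ) (Γ : Type v) [Group Γ] : commutator Γ ≤ Vk k Γ := by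
  rw [commutator_eq_closure]
  apply Subgroup.closure_mono
  rintro x ⟨a, b, h⟩
  exact Or.inl ⟨a, b, h⟩

instance Vk_normal (k : ℕ) (Γ : Type v) [Group Γ] : (Vk k Γ).Normal := by
  constructor
  intro x hx g
  have h1 : ⁅g, x⁆ ∈ Vk k Γ :=
    commutator_le_Vk k Γ (Subgroup.commutator_mem_commutator (Subgroup.mem_top g)
      (Subgroup.mem_top x))
  have h2 : g * x * g⁻¹ = ⁅g, x⁆ * x := by
    rw [commutatorElement_def]; group
  rw [h2]
  exact mul_mem h1 hx

lemma map_Vk {Γ : Type v} {Δ : Type w} [Group Γ] [Group Δ] (k : ℕ) (f : Γ →* Δ)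
    (hf : Function.Surjective f) : (Vk k Γ).map f = Vk k Δ := by
  rw [Vk, MonoidHom.map_closure]
  congr 1
  ext y
  constructor
  · rintro ⟨x, hx, rfl⟩
    rcases hx with ⟨a, b, rfl⟩ | ⟨a, rfl⟩
    · exact Or.inl ⟨f a, f b, (map_commutatorElement f a b).symm⟩
    · exact Or.inr ⟨f a, (map_pow f a k).symm⟩
  · rintro (⟨a, b, rfl⟩ | ⟨a, rfl⟩)
    · obtain ⟨a', rfl⟩ := hf a
      obtain ⟨b', rfl⟩ := hf b
      exact ⟨⁅a', b'⁆, Or.inl ⟨a', b', rfl⟩, map_commutatorElement f a' b'⟩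
    · obtain ⟨a', rfl⟩ := hf a
      exact ⟨a' ^ k, Or.inr ⟨a', rfl⟩, map_pow f a' k⟩

lemma quot_Vk_equiv {Γ : Type v} {Δ : Type w} [Group Γ] [Group Δ] (k : ℕ) (f : Γ →* Δ)
    (hf : Function.Surjective f) (hker : f.ker ≤ Vk k Γ) :
    Nonempty ((Γ ⧸ Vk k Γ) ≃* (Δ ⧸ Vk k Δ)) := by
  let φ : Γ →* Δ ⧸ Vk k Δ := (QuotientGroup.mk' (Vk k Δ)).comp f
  have hφ : Function.Surjective φ := (QuotientGroup.mk'_surjective _).comp hf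
  have hkerφ : φ.ker = Vk k Γ := by
    have h1 : φ.ker = (Vk k Δ).comap f := by
      ext x
      simp [φ, MonoidHom.mem_ker, QuotientGroup.eq_one_iff]
    rw [h1, ← map_Vk k f hf, Subgroup.comap_map_eq, sup_of_le_left hker]
  exact ⟨(QuotientGroup.quotientMulEquivOfEq hkerφ.symm).trans
    (QuotientGroup.quotientKerEquivOfSurjective φ hφ)⟩

lemma abelianization_of_surjective (Γ : Type v) [Group Γ] :
    Function.Surjective (Abelianization.of : Γ →* Abelianization Γ) :=
  fun y => QuotientGroup.induction_on y fun g => ⟨g, rfl⟩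

lemma abelianization_ker_of (Γ : Type v) [Group Γ] :
    (Abelianization.of : Γ →* Abelianization Γ).ker = commutator Γ := by
  ext x
  exact QuotientGroup.eq_one_iff x

/-- The image of the `k`-th power map on a commutative group. -/
def Rk (k : ℕ) (A : Type v) [CommGroup A] : Subgroup A :=
  (powMonoidHom k : A →* A).range

lemma bridge_Vk_Rk (Γ : Type v) [Group Γ] (k : ℕ) :
    Nonempty ((Γ ⧸ Vk k Γ) ≃* (Abelianization Γ ⧸ Rk k (Abelianization Γ))) := by
  set A := Abelianization Γ
  let φ : Γ →* A ⧸ Rk k A := (QuotientGroup.mk' (Rk k A)).comp Abelianization.of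
  have hφ : Function.Surjective φ :=
    (QuotientGroup.mk'_surjective _).comp (abelianization_of_surjective Γ)
  have hker : φ.ker = Vk k Γ := by
    apply le_antisymm
    · intro x hx
      have hx' : Abelianization.of x ∈ Rk k A := by
        rw [MonoidHom.mem_ker, MonoidHom.comp_apply] at hx
        exact (QuotientGroup.eq_one_iff _).mp hx
      obtain ⟨a, ha⟩ := hx'
      obtain ⟨g, rfl⟩ := abelianization_of_surjective Γ a
      have ha' : (Abelianization.of g) ^ k = Abelianization.of x := ha
      have h2 : x * (g ^ k)⁻¹ ∈ commutator Γ := by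
        rw [← abelianization_ker_of, MonoidHom.mem_ker, map_mul, map_inv, map_pow, ha']
        exact mul_inv_cancel _
      have h3 : x = (x * (g ^ k)⁻¹) * g ^ k := by group
      rw [h3]
      exact mul_mem (commutator_le_Vk k Γ h2)
        (Subgroup.subset_closure (Or.inr ⟨g, rfl⟩))
    · rw [Vk, Subgroup.closure_le]
      rintro x (⟨a, b, rfl⟩ | ⟨a, rfl⟩)
      · show φ ⁅a, b⁆ = 1
        have hc : ⁅Abelianization.of a, Abelianization.of b⁆ = 1 :=
          commutatorElement_eq_one_iff_commute.mpr (mul_comm _ _)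
        rw [MonoidHom.comp_apply, map_commutatorElement, hc, map_one]
      · show φ (a ^ k) = 1
        rw [MonoidHom.comp_apply, map_pow]
        exact (QuotientGroup.eq_one_iff _).mpr ⟨Abelianization.of a, rfl⟩
  exact ⟨(QuotientGroup.quotientMulEquivOfEq hker.symm).trans
    (QuotientGroup.quotientKerEquivOfSurjective φ hφ)⟩

lemma finite_Rk_quot (A : Type v) [CommGroup A] [Group.FG A] {k : ℕ} (hk : 0 < k) :
    Finite (A ⧸ Rk k A) := by
  haveI : Group.FG (A ⧸ Rk k A) := Group.fg_of_surjective (QuotientGroup.mk'_surjective _)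
  apply CommGroup.finite_of_fg_torsion
  intro q
  induction q using QuotientGroup.induction_on with
  | H a =>
    refine isOfFinOrder_iff_pow_eq_one.mpr ⟨k, hk, ?_⟩
    rw [← QuotientGroup.mk_pow]
    exact (QuotientGroup.eq_one_iff _).mpr ⟨a, rfl⟩

lemma finite_quot_Vk (Γ : Type v) [Group Γ] [Group.FG Γ] {k : ℕ} (hk : 0 < k) :
    Finite (Γ ⧸ Vk k Γ) := by
  obtain ⟨eqv⟩ := bridge_Vk_Rk Γ k
  haveI : Group.FG (Abelianization Γ) :=
    Group.fg_of_surjective (abelianization_of_surjective Γ)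
  haveI := finite_Rk_quot (Abelianization Γ) hk
  exact Finite.of_equiv _ eqv.symm.toEquiv

lemma Vk_finiteIndex (Γ : Type v) [Group Γ] [Group.FG Γ] {k : ℕ} (hk : 0 < k) :
    (Vk k Γ).FiniteIndex := by
  haveI := finite_quot_Vk Γ hk
  exact ⟨Subgroup.index_ne_zero_of_finite⟩

/-! ### Recovering a finitely generated abelian group from its finite quotients -/

/-- Multiplication by `k` as a homomorphism of an additive commutative group. -/
def smk (k : ℕ) (X : Type v) [AddCommGroup X] : X →+ X :=
  AddMonoidHom.mk' (fun x => k • x) (fun a b => smul_add k a b)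

lemma smk_apply (k : ℕ) {X : Type v} [AddCommGroup X] (x : X) : smk k X x = k • x := rfl

/-- The quotient of `X` by the image of multiplication by `k`. -/
abbrev qmod (k : ℕ) (X : Type v) [AddCommGroup X] : Type v := X ⧸ (smk k X).range

/-- `qmod` is functorial under isomorphisms. -/
def qmod_congr (k : ℕ) {X : Type v} {Y : Type w} [AddCommGroup X] [AddCommGroup Y]
    (e : X ≃+ Y) : qmod k X ≃+ qmod k Y := by
  refine QuotientAddGroup.congr _ _ e ?_
  ext y
  constructor
  · rintro ⟨x, hx, rfl⟩
    obtain ⟨x', rfl⟩ := hx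
    refine ⟨e x', ?_⟩
    show k • e x' = (e : X →+ Y) (k • x')
    rw [map_nsmul]
    rfl
  · rintro ⟨y', rfl⟩
    refine ⟨k • e.symm y', ⟨e.symm y', rfl⟩, ?_⟩
    show (e : X →+ Y) (k • e.symm y') = smk k Y y'
    rw [map_nsmul, smk_apply]
    show k • e (e.symm y') = k • y'
    rw [e.apply_symm_apply]

lemma additive_quot_Rk (k : ℕ) (A : Type v) [CommGroup A] :
    Nonempty (Additive (A ⧸ Rk k A) ≃+ qmod k (Additive A)) := by
  let f : Additive A →+ Additive (A ⧸ Rk k A) :=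
    MonoidHom.toAdditive (QuotientGroup.mk' (Rk k A))
  have hf : Function.Surjective f := by
    intro q
    obtain ⟨a, ha⟩ := QuotientGroup.mk'_surjective (Rk k A) (Additive.toMul q)
    refine ⟨Additive.ofMul a, ?_⟩
    show Additive.ofMul (QuotientGroup.mk' (Rk k A) a) = q
    rw [ha]
    rfl
  have hker : f.ker = (smk k (Additive A)).range := by
    ext x
    constructor
    · intro hx
      have hx0 : QuotientGroup.mk (Additive.toMul x) = (1 : A ⧸ Rk k A) := hx
      have hx' : Additive.toMul x ∈ Rk k A := (QuotientGroup.eq_one_iff _).mp hx0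
      obtain ⟨a, ha⟩ := hx'
      refine ⟨Additive.ofMul a, ?_⟩
      show k • Additive.ofMul a = x
      rw [← ofMul_pow]
      exact congrArg Additive.ofMul ha
    · rintro ⟨y, rfl⟩
      show QuotientGroup.mk' (Rk k A) ((smk k (Additive A) y).toMul) = 1
      rw [smk_apply]
      refine (QuotientGroup.eq_one_iff _).mpr ⟨Additive.toMul y, ?_⟩
      rfl
  exact ⟨((QuotientAddGroup.quotientKerEquivOfSurjective f hf).symm.trans
    (QuotientAddGroup.quotientAddEquivOfEq hker))⟩

lemma qmod_prod_model (n k : ℕ) (D : Type) [AddCommGroup D] :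
    Nonempty (qmod k ((Fin n → ℤ) × D) ≃+ ((Fin n → ZMod k) × qmod k D)) := by
  classical
  let φ₁ : (Fin n → ℤ) →+ (Fin n → ZMod k) :=
    AddMonoidHom.mk' (fun f i => ((f i : ℤ) : ZMod k)) (by
      intro a b
      funext i
      show (((a + b) i : ℤ) : ZMod k) = ((a i : ℤ) : ZMod k) + ((b i : ℤ) : ZMod k)
      rw [Pi.add_apply]
      push_cast
      ring)
  let φ : ((Fin n → ℤ) × D) →+ ((Fin n → ZMod k) × (qmod k D)) :=
    AddMonoidHom.prodMap φ₁ (QuotientAddGroup.mk' _)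
  have hφ : Function.Surjective φ := by
    have h1 : Function.Surjective φ₁ := by
      intro g
      refine ⟨fun i => Classical.choose (ZMod.intCast_surjective (g i)), ?_⟩
      funext i
      exact Classical.choose_spec (ZMod.intCast_surjective (g i))
    exact Function.Surjective.prodMap h1 (QuotientAddGroup.mk'_surjective _)
  have hker : φ.ker = (smk k ((Fin n → ℤ) × D)).range := by
    ext x
    obtain ⟨f, d⟩ := x
    constructor
    · intro h
      have h' : φ₁ f = 0 ∧ QuotientAddGroup.mk' (smk k D).range d = 0 := Prod.mk_inj.mp h
      obtain ⟨hf, hd⟩ := h'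
      have hdvd : ∀ i, (k : ℤ) ∣ f i := by
        intro i
        have h2 : ((f i : ℤ) : ZMod k) = 0 := congrFun hf i
        exact (ZMod.intCast_zmod_eq_zero_iff_dvd _ _).mp h2
      obtain ⟨d', hd'⟩ := (QuotientAddGroup.eq_zero_iff _).mp hd
      refine ⟨(fun i => f i / k, d'), ?_⟩
      show (k • (fun i => f i / k), k • d') = (f, d)
      refine Prod.ext ?_ ?_
      · funext i
        show k • (f i / k) = f i
        rw [nsmul_eq_mul]
        exact Int.mul_ediv_cancel' (hdvd i)
      · exact hd'
    · rintro ⟨⟨g, d'⟩, h⟩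
      have h' : ((k • g, k • d') : (Fin n → ℤ) × D) = (f, d) := h
      rw [← h']
      show ((φ₁ (k • g), QuotientAddGroup.mk' (smk k D).range (k • d')) :
        (Fin n → ZMod k) × qmod k D) = 0
      refine Prod.ext ?_ ?_
      · show φ₁ (k • g) = 0
        funext i
        show (((k • g) i : ℤ) : ZMod k) = 0
        have : (k • g) i = (k : ℤ) * g i := by
          rw [Pi.smul_apply, nsmul_eq_mul]
        rw [this]
        push_cast
        rw [ZMod.natCast_self, zero_mul]
      · exact (QuotientAddGroup.eq_zero_iff _).mpr ⟨d', rfl⟩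
  exact ⟨(QuotientAddGroup.quotientAddEquivOfEq hker.symm).trans
    (QuotientAddGroup.quotientKerEquivOfSurjective φ hφ)⟩

lemma qmod_subsingleton (k : ℕ) (D : Type w) [AddCommGroup D]
    (h : Function.Surjective (fun d : D => k • d)) : Subsingleton (qmod k D) := by
  have : (smk k D).range = ⊤ := by
    rw [AddSubgroup.eq_top_iff']
    intro d
    obtain ⟨d', hd'⟩ := h d
    exact ⟨d', hd'⟩
  show Subsingleton (D ⧸ (smk k D).range)
  rw [this]
  exact QuotientAddGroup.subsingleton_quotient_top

lemma qmod_self (k : ℕ) (D : Type w) [AddCommGroup D] (h : ∀ d : D, k • d = 0) :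
    Nonempty (qmod k D ≃+ D) := by
  have hr : (smk k D).range = ⊥ := by
    rw [AddSubgroup.eq_bot_iff_forall]
    rintro x ⟨y, rfl⟩
    exact h y
  exact ⟨(QuotientAddGroup.quotientAddEquivOfEq hr).trans QuotientAddGroup.quotientBot⟩

/-! #### The functor `X ↦ X[m]/mX` on groups killed by `m²` -/

/-- The `m`-torsion subgroup. -/
def Tm (m : ℕ) (X : Type v) [AddCommGroup X] : AddSubgroup X := (smk m X).ker

/-- Multiplication by `m`, corestricted to the `m`-torsion (for `m²`-killed groups). -/
def taum (m : ℕ) (X : Type v) [AddCommGroup X] (hX : ∀ x : X, m • m • x = 0) :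
    X →+ Tm m X :=
  (smk m X).codRestrict (Tm m X) (fun x => by
    show m • (m • x) = 0
    exact hX x)

/-- The invariant `X[m]/mX`. -/
abbrev FmQ (m : ℕ) (X : Type v) [AddCommGroup X] (hX : ∀ x : X, m • m • x = 0) : Type v :=
  Tm m X ⧸ (taum m X hX).range

/-- `FmQ` is functorial under isomorphisms. -/
def Fm_congr (m : ℕ) {X : Type v} {Y : Type w} [AddCommGroup X] [AddCommGroup Y]
    (e : X ≃+ Y) (hX : ∀ x : X, m • m • x = 0) (hY : ∀ y : Y, m • m • y = 0) :
    FmQ m X hX ≃+ FmQ m Y hY := by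
  refine QuotientAddGroup.congr _ _ ?_ ?_
  · exact
    { toFun := fun x => ⟨e x.1, by
        show m • (e x.1) = 0
        rw [← map_nsmul]
        have hx : m • x.1 = 0 := x.2
        rw [hx, map_zero]⟩
      invFun := fun y => ⟨e.symm y.1, by
        show m • (e.symm y.1) = 0
        rw [← map_nsmul]
        have hy : m • y.1 = 0 := y.2
        rw [hy, map_zero]⟩
      left_inv := fun x => Subtype.ext (e.symm_apply_apply x.1)
      right_inv := fun y => Subtype.ext (e.apply_symm_apply y.1)
      map_add' := fun a b => Subtype.ext (map_add e a.1 b.1) }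
  · ext y
    constructor
    · rintro ⟨t, ⟨x, rfl⟩, rfl⟩
      refine ⟨e x, Subtype.ext ?_⟩
      show m • (e x) = e ((taum m X hX x).1)
      show m • (e x) = e (m • x)
      rw [map_nsmul]
    · rintro ⟨y', rfl⟩
      refine ⟨taum m X hX (e.symm y'), ⟨e.symm y', rfl⟩, Subtype.ext ?_⟩
      show e ((taum m X hX (e.symm y')).1) = (taum m Y hY y').1
      show e (m • e.symm y') = m • y'
      rw [map_nsmul, e.apply_symm_apply]

lemma zmod_smul_sq (m : ℕ) (hm : 0 < m) (x : ZMod (m * m)) (hx : m • x = 0) :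
    ∃ y : ZMod (m * m), m • y = x := by
  haveI : NeZero (m * m) := ⟨(Nat.mul_pos hm hm).ne'⟩
  have hval : ((x.val : ℕ) : ZMod (m * m)) = x := ZMod.natCast_rightInverse x
  have h0 : ((m * x.val : ℕ) : ZMod (m * m)) = 0 := by
    rw [Nat.cast_mul, hval, ← nsmul_eq_mul]
    exact hx
  have hdvd : m * m ∣ m * x.val := (ZMod.natCast_eq_zero_iff _ _).mp h0
  obtain ⟨b, hb⟩ := (Nat.mul_dvd_mul_iff_left hm).mp hdvd
  refine ⟨(b : ZMod (m * m)), ?_⟩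
  rw [nsmul_eq_mul, ← Nat.cast_mul, ← hb, hval]

lemma Fm_model (m : ℕ) (hm : 0 < m) (n : ℕ) (D : Type) [AddCommGroup D]
    (hD : ∀ d : D, m • d = 0) (hX : ∀ x : (Fin n → ZMod (m * m)) × D, m • m • x = 0) :
    Nonempty (FmQ m ((Fin n → ZMod (m * m)) × D) hX ≃+ D) := by
  classical
  let X := (Fin n → ZMod (m * m)) × D
  let proj : Tm m X →+ D := (AddMonoidHom.snd _ _).comp (Tm m X).subtype
  have hsurj : Function.Surjective proj := by
    intro d
    refine ⟨⟨(0, d), ?_⟩, rfl⟩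
    show m • ((0 : Fin n → ZMod (m * m)), d) = 0
    refine Prod.ext ?_ ?_
    · show m • (0 : Fin n → ZMod (m * m)) = 0
      rw [smul_zero]
    · exact hD d
  have hker : proj.ker = (taum m X hX).range := by
    ext x
    constructor
    · intro hx
      have hx2 : x.1.2 = 0 := hx
      have hf : ∀ i, m • (x.1.1 i) = 0 := by
        intro i
        have h1 : m • x.1 = 0 := x.2
        have h2 : m • x.1.1 = 0 := congrArg Prod.fst h1
        exact congrFun h2 i
      choose g hg using fun i => zmod_smul_sq m hm (x.1.1 i) (hf i)
      refine ⟨(g, 0), Subtype.ext ?_⟩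
      show m • ((g, (0 : D)) : X) = x.1
      refine Prod.ext ?_ ?_
      · show m • g = x.1.1
        funext i
        exact hg i
      · show m • (0 : D) = x.1.2
        rw [smul_zero, hx2]
    · rintro ⟨⟨g, d'⟩, rfl⟩
      show (m • ((g, d') : X)).2 = 0
      show m • d' = 0
      exact hD d'
  exact ⟨(QuotientAddGroup.quotientAddEquivOfEq hker.symm).trans
    (QuotientAddGroup.quotientKerEquivOfSurjective proj hsurj)⟩

lemma card_quot_Rk (A : Type v) [CommGroup A] {n : ℕ} {D : Type} [AddCommGroup D] [Finite D]
    (g : Additive A ≃+ (Fin n → ℤ) × D) {p : ℕ} (hp : p.Prime)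
    (hpD : ¬ (p ∣ Nat.card D)) : Nat.card (A ⧸ Rk p A) = p ^ n := by
  classical
  obtain ⟨e1⟩ := additive_quot_Rk p A
  have e2 := qmod_congr p g
  obtain ⟨e3⟩ := qmod_prod_model n p D
  haveI hsub : Subsingleton (qmod p D) := by
    apply qmod_subsingleton
    have hzero : ∀ d : D, p • d = 0 → d = 0 := by
      intro d hd
      have h1 : addOrderOf d ∣ p := addOrderOf_dvd_of_nsmul_eq_zero hd
      have h2 : addOrderOf d ∣ Nat.card D := addOrderOf_dvd_natCard d
      rcases (Nat.Prime.eq_one_or_self_of_dvd hp _ h1) with h | h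
      · exact AddMonoid.addOrderOf_eq_one_iff.mp h
      · rw [h] at h2
        exact absurd h2 hpD
    have hinj : Function.Injective (fun d : D => p • d) := by
      intro x y hxy
      have h3 : p • (x - y) = 0 := by
        rw [smul_sub]
        rw [show p • x = p • y from hxy]
        rw [sub_self]
      exact sub_eq_zero.mp (hzero _ h3)
    exact Finite.injective_iff_surjective.mp hinj
  haveI : NeZero p := ⟨hp.pos.ne'⟩
  have hc1 : Nat.card (A ⧸ Rk p A) = Nat.card (qmod p ((Fin n → ℤ) × D)) := by
    have := Nat.card_congr ((e1.trans e2).toEquiv)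
    rw [← this]
    exact (Nat.card_congr (Additive.ofMul (α := A ⧸ Rk p A))).symm
  rw [hc1, Nat.card_congr e3.toEquiv, Nat.card_prod]
  have hq1 : Nat.card (qmod p D) = 1 := Nat.card_eq_one_iff_unique.mpr ⟨hsub, ⟨0⟩⟩
  rw [hq1, mul_one]
  rw [Nat.card_eq_fintype_card, Fintype.card_pi]
  simp [ZMod.card]

lemma model_killed (m n : ℕ) (D : Type) [AddCommGroup D] (hD : ∀ d : D, m • d = 0) :
    ∀ x : (Fin n → ZMod (m * m)) × D, m • m • x = 0 := by
  rintro ⟨f, d⟩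
  have h1 : m • m • f = 0 := by
    funext i
    show m • m • (f i) = 0
    rw [← mul_nsmul, nsmul_eq_mul, ZMod.natCast_self, zero_mul]
  have h2 : m • m • d = 0 := by rw [hD d, smul_zero]
  have h3 : m • m • ((f, d) : (Fin n → ZMod (m * m)) × D) = (m • m • f, m • m • d) := rfl
  rw [h3, h1, h2]
  rfl

lemma abelian_recover (A : Type v) (B : Type w) [CommGroup A] [CommGroup B]
    (hA : Group.FG A) (hB : Group.FG B)
    (h : ∀ k : ℕ, 0 < k → Nonempty ((A ⧸ Rk k A) ≃* (B ⧸ Rk k B))) :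
    Nonempty (A ≃* B) := by
  classical
  haveI := hA
  haveI := hB
  obtain ⟨nA, ιA, instA, pA, hpA, eA, ⟨fA⟩⟩ :=
    AddCommGroup.equiv_free_prod_directSum_zmod (Additive A)
  obtain ⟨nB, ιB, instB, pB, hpB, eB, ⟨fB⟩⟩ :=
    AddCommGroup.equiv_free_prod_directSum_zmod (Additive B)
  set DA := DirectSum ιA fun i => ZMod (pA i ^ eA i) with hDAdef
  set DB := DirectSum ιB fun i => ZMod (pB i ^ eB i) with hDBdef
  haveI : ∀ i, NeZero (pA i ^ eA i) := fun i => ⟨(pow_pos (hpA i).pos _).ne'⟩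
  haveI : ∀ i, NeZero (pB i ^ eB i) := fun i => ⟨(pow_pos (hpB i).pos _).ne'⟩
  haveI : Finite DA := Finite.of_equiv _ (DFinsupp.equivFunOnFintype (ι := ιA)).symm
  haveI : Finite DB := Finite.of_equiv _ (DFinsupp.equivFunOnFintype (ι := ιB)).symm
  have gA : Additive A ≃+ (Fin nA → ℤ) × DA :=
    fA.trans ((Finsupp.addEquivFunOnFinite).prodCongr (AddEquiv.refl DA))
  have gB : Additive B ≃+ (Fin nB → ℤ) × DB :=
    fB.trans ((Finsupp.addEquivFunOnFinite).prodCongr (AddEquiv.refl DB))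
  set cA := Nat.card DA with hcAdef
  set cB := Nat.card DB with hcBdef
  have hcA : 0 < cA := Nat.card_pos
  have hcB : 0 < cB := Nat.card_pos
  set m := cA * cB with hmdef
  have hm : 0 < m := Nat.mul_pos hcA hcB
  have hDA : ∀ d : DA, m • d = 0 := by
    intro d
    have h1 : cA • d = 0 := card_nsmul_eq_zero'
    rw [hmdef, mul_nsmul, h1, smul_zero]
  have hDB : ∀ d : DB, m • d = 0 := by
    intro d
    have h1 : cB • d = 0 := card_nsmul_eq_zero'
    rw [hmdef, Nat.mul_comm, mul_nsmul, h1, smul_zero]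
  -- rank equality
  obtain ⟨p, hpm, hp⟩ := Nat.exists_infinite_primes (m + 1)
  have hpDA : ¬ (p ∣ cA) := by
    intro hdvd
    have := Nat.le_of_dvd hcA hdvd
    have hle : cA ≤ m := Nat.le_mul_of_pos_right _ hcB
    omega
  have hpDB : ¬ (p ∣ cB) := by
    intro hdvd
    have := Nat.le_of_dvd hcB hdvd
    have hle : cB ≤ m := Nat.le_mul_of_pos_left _ hcA
    omega
  obtain ⟨ep⟩ := h p hp.pos
  have hcardA : Nat.card (A ⧸ Rk p A) = p ^ nA := card_quot_Rk A gA hp hpDA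
  have hcardB : Nat.card (B ⧸ Rk p B) = p ^ nB := card_quot_Rk B gB hp hpDB
  have hnAB : nA = nB := by
    apply Nat.pow_right_injective hp.two_le
    show p ^ nA = p ^ nB
    rw [← hcardA, ← hcardB]
    exact Nat.card_congr ep.toEquiv
  -- torsion equality
  have hXA : ∀ x : (Fin nA → ZMod (m * m)) × DA, m • m • x = 0 :=
    model_killed m nA DA hDA
  have hXB : ∀ x : (Fin nB → ZMod (m * m)) × DB, m • m • x = 0 :=
    model_killed m nB DB hDB
  obtain ⟨u1A⟩ := additive_quot_Rk (m * m) A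
  have u2A := qmod_congr (m * m) gA
  obtain ⟨u3A⟩ := qmod_prod_model nA (m * m) DA
  obtain ⟨u4A⟩ := qmod_self (m * m) DA (fun d => by rw [mul_nsmul, hDA d, smul_zero])
  have chainA : Additive (A ⧸ Rk (m * m) A) ≃+ (Fin nA → ZMod (m * m)) × DA :=
    u1A.trans (u2A.trans (u3A.trans ((AddEquiv.refl _).prodCongr u4A)))
  obtain ⟨u1B⟩ := additive_quot_Rk (m * m) B
  have u2B := qmod_congr (m * m) gB
  obtain ⟨u3B⟩ := qmod_prod_model nB (m * m) DB
  obtain ⟨u4B⟩ := qmod_self (m * m) DB (fun d => by rw [mul_nsmul, hDB d, smul_zero])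
  have chainB : Additive (B ⧸ Rk (m * m) B) ≃+ (Fin nB → ZMod (m * m)) × DB :=
    u1B.trans (u2B.trans (u3B.trans ((AddEquiv.refl _).prodCongr u4B)))
  obtain ⟨em2⟩ := h (m * m) (Nat.mul_pos hm hm)
  have ψ : ((Fin nA → ZMod (m * m)) × DA) ≃+ ((Fin nB → ZMod (m * m)) × DB) :=
    chainA.symm.trans ((MulEquiv.toAdditive em2).trans chainB)
  obtain ⟨vA⟩ := Fm_model m hm nA DA hDA hXA
  obtain ⟨vB⟩ := Fm_model m hm nB DB hDB hXB
  have eD : DA ≃+ DB := vA.symm.trans ((Fm_congr m ψ hXA hXB).trans vB)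
  subst hnAB
  have final : Additive A ≃+ Additive B :=
    gA.trans (((AddEquiv.refl (Fin nA → ℤ)).prodCongr eD).trans gB.symm)
  exact ⟨MulEquiv.toAdditive.symm final⟩

lemma abelianization_of_quot_Vk {Γ : Type v} {Δ : Type w} [Group Γ] [Group Δ]
    (hΓ : Group.FG Γ) (hΔ : Group.FG Δ)
    (hq : ∀ k : ℕ, 0 < k → Nonempty ((Γ ⧸ Vk k Γ) ≃* (Δ ⧸ Vk k Δ))) :
    Nonempty (Abelianization Γ ≃* Abelianization Δ) := by
  haveI := hΓ
  haveI := hΔ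
  haveI : Group.FG (Abelianization Γ) := Group.fg_of_surjective (abelianization_of_surjective Γ)
  haveI : Group.FG (Abelianization Δ) := Group.fg_of_surjective (abelianization_of_surjective Δ)
  apply abelian_recover (Abelianization Γ) (Abelianization Δ) inferInstance inferInstance
  intro k hk
  obtain ⟨e0⟩ := hq k hk
  obtain ⟨e1⟩ := bridge_Vk_Rk Γ k
  obtain ⟨e2⟩ := bridge_Vk_Rk Δ k
  exact ⟨e1.symm.trans (e0.trans e2)⟩

theorem main_aux (G₁ : Type u) (G₂ : Type u) [Group G₁] [Group G₂]
    (hfg₁ : Group.FG G₁) (hfg₂ : Group.FG G₂)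
    (e : ProfiniteCompletion G₁ ≃* ProfiniteCompletion G₂)
    (he : Continuous e) (he' : Continuous e.symm)
    (n : ℕ) (hn : 0 < n) (H : Subgroup G₁) (hHidx : H.index = n) :
    ∃ K : Subgroup G₂, K.index = n ∧ Nonempty (Abelianization H ≃* Abelianization K) := by
  classical
  haveI := hfg₁
  haveI := hfg₂
  haveI hHfi : H.FiniteIndex := ⟨by rw [hHidx]; exact hn.ne'⟩
  let Nc : FinNormal G₁ := ⟨H.normalCore, inferInstance, inferInstance⟩
  have hNcH : Nc.1 ≤ H := Subgroup.normalCore_le H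
  set Hhat : Subgroup (ProfiniteCompletion G₁) := H.map (iota G₁) ⊔ KK Nc with hHhatdef
  set U : Subgroup (ProfiniteCompletion G₂) := Hhat.map e.toMonoidHom with hUdef
  set K : Subgroup G₂ := U.comap (iota G₂) with hKdef
  have hmapset : ∀ (S : Subgroup (ProfiniteCompletion G₁)),
      ((S.map e.toMonoidHom : Subgroup (ProfiniteCompletion G₂)) :
        Set (ProfiniteCompletion G₂)) = ⇑e.symm ⁻¹' (S : Set _) := by
    intro S
    ext x
    constructor
    · rintro ⟨y, hy, rfl⟩
      show e.symm (e y) ∈ S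
      rw [e.symm_apply_apply]
      exact hy
    · intro hx
      exact ⟨e.symm x, hx, e.apply_symm_apply x⟩
  have hHhatopen : IsOpen (Hhat : Set (ProfiniteCompletion G₁)) := by
    apply Subgroup.isOpen_of_mem_nhds
    exact Filter.mem_of_superset ((isOpen_KK Nc).mem_nhds (KK Nc).one_mem)
      (fun x hx => Subgroup.mem_sup_right hx)
  have hUopen : IsOpen (U : Set (ProfiniteCompletion G₂)) := by
    rw [hUdef, hmapset]
    exact hHhatopen.preimage he'
  obtain ⟨M, hMsub⟩ := exists_KK_subset_of_isOpen hUopen (U.one_mem)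
  have hMU : KK M ≤ U := fun x hx => hMsub hx
  have hMK : M.1 ≤ K := by
    rw [hKdef, ← comap_iota_KK M]
    exact Subgroup.comap_mono hMU
  haveI hKfi : K.FiniteIndex := Subgroup.finiteIndex_of_le hMK
  have zig : ∀ k : ℕ, 0 < k →
      (H.index = K.index ∧ Nonempty ((↥H ⧸ Vk k ↥H) ≃* (↥K ⧸ Vk k ↥K))) := by
    intro k hk
    have VkHfi : (Vk k ↥H).FiniteIndex := Vk_finiteIndex ↥H hk
    have VkKfi : (Vk k ↥K).FiniteIndex := Vk_finiteIndex ↥K hk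
    set WH : Subgroup G₁ := (Vk k ↥H).map H.subtype with hWHdef
    set WK : Subgroup G₂ := (Vk k ↥K).map K.subtype with hWKdef
    have hWHle : WH ≤ H := Subgroup.map_subtype_le _
    have hWKle : WK ≤ K := Subgroup.map_subtype_le _
    haveI hWHfi : WH.FiniteIndex := by
      constructor
      rw [hWHdef, Subgroup.index_map_subtype]
      exact Nat.mul_ne_zero VkHfi.index_ne_zero hHfi.index_ne_zero
    haveI hWKfi : WK.FiniteIndex := by
      constructor
      rw [hWKdef, Subgroup.index_map_subtype]
      exact Nat.mul_ne_zero VkKfi.index_ne_zero hKfi.index_ne_zero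
    let N10 : FinNormal G₁ := ⟨WH.normalCore, inferInstance, inferInstance⟩
    have hN10 : N10.1 ≤ WH := Subgroup.normalCore_le WH
    have hopen1 : IsOpen (((KK N10).map e.toMonoidHom : Subgroup _) :
        Set (ProfiniteCompletion G₂)) := by
      rw [hmapset]
      exact (isOpen_KK N10).preimage he'
    obtain ⟨M2, hM2sub⟩ := exists_KK_subset_of_isOpen hopen1 (Subgroup.one_mem _)
    have hM2 : KK M2 ≤ (KK N10).map e.toMonoidHom := fun x hx => hM2sub hx
    let N2 : FinNormal G₂ := ⟨WK.normalCore ⊓ M2.1, inferInstance, inferInstance⟩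
    have hN2WK : N2.1 ≤ WK := le_trans inf_le_left (Subgroup.normalCore_le WK)
    have hN2K : N2.1 ≤ K := le_trans hN2WK hWKle
    have hKKN2 : KK N2 ≤ (KK N10).map e.toMonoidHom :=
      le_trans (KK_mono inf_le_right) hM2
    have hopen2 : IsOpen (((KK N2).comap e.toMonoidHom : Subgroup _) :
        Set (ProfiniteCompletion G₁)) := by
      rw [Subgroup.coe_comap]
      exact (isOpen_KK N2).preimage he
    obtain ⟨M1, hM1sub⟩ := exists_KK_subset_of_isOpen hopen2 (Subgroup.one_mem _)
    have hM1 : KK M1 ≤ (KK N2).comap e.toMonoidHom := fun x hx => hM1sub hx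
    let N1 : FinNormal G₁ := ⟨Nc.1 ⊓ N10.1 ⊓ M1.1, inferInstance, inferInstance⟩
    have hN1H : N1.1 ≤ H := le_trans (le_trans inf_le_left inf_le_left) hNcH
    have hKKN1e : (KK N1).map e.toMonoidHom ≤ KK N2 := by
      rw [Subgroup.map_le_iff_le_comap]
      exact le_trans (KK_mono inf_le_right) hM1
    let β₂ : G₂ →* (ProfiniteCompletion G₂ ⧸ KK N2) :=
      (QuotientGroup.mk' (KK N2)).comp (iota G₂)
    let β₁ : G₁ →* (ProfiniteCompletion G₂ ⧸ KK N2) :=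
      (QuotientGroup.mk' (KK N2)).comp (e.toMonoidHom.comp (iota G₁))
    have hβ₂ : Function.Surjective β₂ := by
      intro q
      obtain ⟨x, rfl⟩ := QuotientGroup.mk'_surjective (KK N2) q
      obtain ⟨g, hg⟩ := exists_iota_inv_mul_mem (le_refl (KK N2)) x
      exact ⟨g, (QuotientGroup.mk'_eq_mk' (KK N2)).mpr ⟨(iota G₂ g)⁻¹ * x, hg, by group⟩⟩
    have hβ₁ : Function.Surjective β₁ := by
      intro q
      obtain ⟨x, rfl⟩ := QuotientGroup.mk'_surjective (KK N2) q
      obtain ⟨g, hg⟩ := exists_iota_inv_mul_mem hM1 (e.symm x)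
      have h3 : e.toMonoidHom ((iota G₁ g)⁻¹ * e.symm x) ∈ KK N2 := hg
      have h4 : e.toMonoidHom ((iota G₁ g)⁻¹ * e.symm x)
          = (e.toMonoidHom (iota G₁ g))⁻¹ * x := by
        rw [map_mul, map_inv]
        congr 1
        exact e.apply_symm_apply x
      rw [h4] at h3
      exact ⟨g, (QuotientGroup.mk'_eq_mk' (KK N2)).mpr
        ⟨(e.toMonoidHom (iota G₁ g))⁻¹ * x, h3, by
          show e.toMonoidHom (iota G₁ g) * ((e.toMonoidHom (iota G₁ g))⁻¹ * x) = x
          group⟩⟩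
    have hkerβ₂ : β₂.ker = N2.1 := by
      ext x
      constructor
      · intro hx
        have hx' : iota G₂ x ∈ KK N2 := (QuotientGroup.eq_one_iff _).mp hx
        rw [← comap_iota_KK N2]
        exact hx'
      · intro hx
        have hx' : iota G₂ x ∈ KK N2 := by
          rw [← comap_iota_KK N2] at hx
          exact hx
        exact (QuotientGroup.eq_one_iff _).mpr hx'
    have hkerβ₁N10 : β₁.ker ≤ N10.1 := by
      intro x hx
      have hx' : e.toMonoidHom (iota G₁ x) ∈ KK N2 := (QuotientGroup.eq_one_iff _).mp hx
      have hx2 : e.toMonoidHom (iota G₁ x) ∈ (KK N10).map e.toMonoidHom := hKKN2 hx'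
      obtain ⟨y, hy, hxy⟩ := hx2
      have hyx : y = iota G₁ x := e.injective hxy
      rw [← comap_iota_KK N10]
      show iota G₁ x ∈ KK N10
      rw [← hyx]
      exact hy
    have hKKN10Hhat : KK N10 ≤ Hhat := by
      rw [hHhatdef]
      exact KK_le_map_sup (le_trans hN10 hWHle)
    have hKKN2U : KK N2 ≤ U :=
      le_trans hKKN2 (by rw [hUdef]; exact Subgroup.map_mono hKKN10Hhat)
    have h1 : H.map (e.toMonoidHom.comp (iota G₁)) ⊔ KK N2 = U := by
      apply le_antisymm
      · apply sup_le
        · rw [← Subgroup.map_map, hUdef]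
          exact Subgroup.map_mono le_sup_left
        · exact hKKN2U
      · have hHhat2 : Hhat ≤ H.map (iota G₁) ⊔ KK N1 := by
          rw [hHhatdef]
          exact sup_le le_sup_left (KK_le_map_sup hNcH)
        rw [hUdef]
        calc Hhat.map e.toMonoidHom
            ≤ (H.map (iota G₁) ⊔ KK N1).map e.toMonoidHom := Subgroup.map_mono hHhat2
          _ = (H.map (iota G₁)).map e.toMonoidHom ⊔ (KK N1).map e.toMonoidHom := by
              rw [Subgroup.map_sup]
          _ ≤ H.map (e.toMonoidHom.comp (iota G₁)) ⊔ KK N2 :=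
              sup_le_sup (le_of_eq (Subgroup.map_map _ _ _)) hKKN1e
    have h2 : K.map (iota G₂) ⊔ KK N2 = U := by
      rw [hKdef]
      exact map_iota_comap_sup_KK hKKN2U
    have hbot : (KK N2).map (QuotientGroup.mk' (KK N2)) = ⊥ := by
      rw [eq_bot_iff]
      rintro y ⟨x, hx, rfl⟩
      exact (QuotientGroup.eq_one_iff x).mpr hx
    have himg : H.map β₁ = K.map β₂ := by
      have e1 : H.map β₁
          = (H.map (e.toMonoidHom.comp (iota G₁))).map (QuotientGroup.mk' (KK N2)) :=
        (Subgroup.map_map _ _ _).symm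
      have e2 : K.map β₂ = (K.map (iota G₂)).map (QuotientGroup.mk' (KK N2)) :=
        (Subgroup.map_map _ _ _).symm
      have e3 : ∀ X : Subgroup (ProfiniteCompletion G₂),
          (X ⊔ KK N2).map (QuotientGroup.mk' (KK N2)) = X.map (QuotientGroup.mk' (KK N2)) := by
        intro X
        rw [Subgroup.map_sup, hbot, sup_bot_eq]
      rw [e1, e2, ← e3 (H.map (e.toMonoidHom.comp (iota G₁))), ← e3 (K.map (iota G₂)), h1, h2]
    have hidx : H.index = K.index := by
      have i1 : ((H.map β₁).comap β₁).index = (H.map β₁).index :=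
        Subgroup.index_comap_of_surjective _ hβ₁
      have i2 : ((K.map β₂).comap β₂).index = (K.map β₂).index :=
        Subgroup.index_comap_of_surjective _ hβ₂
      have hHcomap : (H.map β₁).comap β₁ = H := by
        rw [Subgroup.comap_map_eq]
        exact sup_of_le_left (le_trans hkerβ₁N10 (le_trans hN10 hWHle))
      have hKcomap : (K.map β₂).comap β₂ = K := by
        rw [Subgroup.comap_map_eq, hkerβ₂]
        exact sup_of_le_left hN2K
      rw [hHcomap] at i1
      rw [hKcomap] at i2
      rw [i1, i2, himg]
    refine ⟨hidx, ?_⟩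
    let φ₁ : ↥H →* ↥(H.map β₁) := (β₁.domRestrict H).codRestrict (H.map β₁)
      (fun x => Subgroup.mem_map_of_mem β₁ x.2)
    have hφ₁ : Function.Surjective φ₁ := by
      rintro ⟨q, hq⟩
      obtain ⟨h0, hh0, rfl⟩ := hq
      exact ⟨⟨h0, hh0⟩, rfl⟩
    have hkerφ₁ : φ₁.ker ≤ Vk k ↥H := by
      rw [show φ₁.ker = (β₁.domRestrict H).ker from MonoidHom.ker_codRestrict _ _ _, MonoidHom.ker_restrict]
      intro x hx
      have hx1 : (x : G₁) ∈ β₁.ker := hx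
      have hx2 : (x : G₁) ∈ WH := hN10 (hkerβ₁N10 hx1)
      obtain ⟨v, hv, hvx⟩ := hx2
      rw [show x = v from Subtype.ext hvx.symm]
      exact hv
    let φ₂ : ↥K →* ↥(H.map β₁) := (β₂.domRestrict K).codRestrict (H.map β₁)
      (fun x => by rw [himg]; exact Subgroup.mem_map_of_mem β₂ x.2)
    have hφ₂ : Function.Surjective φ₂ := by
      rintro ⟨q, hq⟩
      have hq' : q ∈ K.map β₂ := by rw [← himg]; exact hq
      obtain ⟨h0, hh0, hfoo⟩ := hq'
      exact ⟨⟨h0, hh0⟩, Subtype.ext hfoo⟩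
    have hkerφ₂ : φ₂.ker ≤ Vk k ↥K := by
      rw [show φ₂.ker = (β₂.domRestrict K).ker from MonoidHom.ker_codRestrict _ _ _, MonoidHom.ker_restrict]
      intro x hx
      have hx1 : (x : G₂) ∈ β₂.ker := hx
      have hx2 : (x : G₂) ∈ WK := by
        apply hN2WK
        rw [← hkerβ₂]
        exact hx1
      obtain ⟨v, hv, hvx⟩ := hx2
      rw [show x = v from Subtype.ext hvx.symm]
      exact hv
    obtain ⟨q1⟩ := quot_Vk_equiv k φ₁ hφ₁ hkerφ₁
    obtain ⟨q2⟩ := quot_Vk_equiv k φ₂ hφ₂ hkerφ₂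
    exact ⟨q1.trans q2.symm⟩
  have hKidx : K.index = n := by
    rw [← (zig 1 Nat.one_pos).1, hHidx]
  refine ⟨K, hKidx, ?_⟩
  exact abelianization_of_quot_Vk inferInstance inferInstance (fun k hk => (zig k hk).2)

/-- If two finitely generated groups have topologically isomorphic
profinite completions, then for every `n > 0`, every index-`n` subgroup of one has an
index-`n` subgroup of the other with isomorphic abelianization (in both directions);
in particular `FIA(G₁) = FIA(G₂)`. -/
theorem fia_eq_of_profiniteCompletion_iso
    (G₁ G₂ : Type u) [Group G₁] [Group G₂]
    (hfg₁ : Group.FG G₁) (hfg₂ : Group.FG G₂)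
    (e : ProfiniteCompletion G₁ ≃* ProfiniteCompletion G₂)
    (he : Continuous e) (he' : Continuous e.symm) :
    (∀ n : ℕ, 0 < n → ∀ H : Subgroup G₁, H.index = n →
      ∃ K : Subgroup G₂, K.index = n ∧
        Nonempty (Abelianization H ≃* Abelianization K)) ∧
    (∀ n : ℕ, 0 < n → ∀ K : Subgroup G₂, K.index = n →
      ∃ H : Subgroup G₁, H.index = n ∧
        Nonempty (Abelianization K ≃* Abelianization H)) := by
  constructor
  · exact fun n hn H hH => main_aux G₁ G₂ hfg₁ hfg₂ e he he' n hn H hH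
  · intro n hn K hK
    have he2 : Continuous ⇑e.symm.symm := by rw [MulEquiv.symm_symm]; exact he
    exact main_aux G₂ G₁ hfg₂ hfg₁ e.symm he' he2 n hn K hK

end ProfinitePaper
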